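/- With the attitude-thrust extraction as above (μ_d ∉ L, u_t = ‖μ_d − g e3‖, Q_d = (η_d, q_d) as defined, and R_d = R(Q_d) the Rodrigues rotation), the extraction equation holds: μ_d = g e3 − u_t R_d^T e3. -/

import Mathlib

open Matrix

noncomputable section

/-- The skew-symmetric (cross-product) matrix `S(x)`, satisfying `S(x) y = x × y`. -/
def sk (x : Fin 3 → ℝ) : Matrix (Fin 3) (Fin 3) ℝ :=
  !![0, -x 2, x 1; x 2, 0, -x 0; -x 1, x 0, 0]

/-- The Euclidean norm of a vector in ℝ³. -/
def vnorm (x : Fin 3 → ℝ) : ℝ := Real.sqrt (x ⬝ᵥ x)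

/-- The Rodrigues map `R(Q) = I + 2 S(q)² - 2 η S(q)`. -/
def rod (η : ℝ) (q : Fin 3 → ℝ) : Matrix (Fin 3) (Fin 3) ℝ :=
  1 + (2 : ℝ) • sk q ^ 2 - (2 * η) • sk q

/-- The third basis vector `e₃ = (0,0,1)`. -/
def e3 : Fin 3 → ℝ := ![0, 0, 1]

/-- The singular set `L = {(0,0,z) : z ≥ g}`. -/
def Lsing (g : ℝ) : Set (Fin 3 → ℝ) := {x | x 0 = 0 ∧ x 1 = 0 ∧ g ≤ x 2}

/-
With `v = μ_d - g e₃` and `n = ‖v‖`: `q_d` is horizontal and orthogonal to `v`, and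
`2 n η_d² = n - v₂`, so the Rodrigues formula gives `R_dᵀ e₃ = -v / n` by a direct computation. The hypothesis `μ_d ∉ L` says exactly that
`v₂ < n`, which makes `η_d` real and nonzero. Then `g e₃ - u_t R_dᵀ e₃ = g e₃ + v = μ_d`.
-/

lemma dotProduct_self_fin_three (v : Fin 3 → ℝ) : v ⬝ᵥ v = v 0 ^ 2 + v 1 ^ 2 + v 2 ^ 2 := by
  simp only [dotProduct, Fin.sum_univ_three]
  ring

lemma vnorm_sq (v : Fin 3 → ℝ) : vnorm v ^ 2 = v ⬝ᵥ v := by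
  rw [vnorm, Real.sq_sqrt (by rw [dotProduct_self_fin_three]; positivity)]

lemma mem_Lsing_iff_sub_smul_e3 (g : ℝ) (μ : Fin 3 → ℝ) : μ ∈ Lsing g ↔ μ - g • e3 ∈ Lsing 0 := by
  simp [Lsing, e3, vecHead, vecTail, sub_nonneg]

lemma apply_two_lt_vnorm_of_notMem_Lsing_zero {v : Fin 3 → ℝ} (hv : v ∉ Lsing 0) :
    v 2 < vnorm v := by
  have hsq := vnorm_sq v
  rw [dotProduct_self_fin_three] at hsq
  have hnonneg : 0 ≤ vnorm v := Real.sqrt_nonneg _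
  by_contra! hle
  refine hv ⟨?_, ?_, hnonneg.trans hle⟩ <;> nlinarith [sq_nonneg (v 0), sq_nonneg (v 1)]

lemma e3_dotProduct (x : Fin 3 → ℝ) : e3 ⬝ᵥ x = x 2 := by
  simp [e3, dotProduct, Fin.sum_univ_three]

lemma sk_mulVec_e3 (x : Fin 3 → ℝ) : sk x *ᵥ e3 = ![x 1, -x 0, 0] := by
  ext i
  fin_cases i <;> simp [sk, e3, mulVec, dotProduct, Fin.sum_univ_three]

lemma rod_transpose_mulVec_e3 (η : ℝ) (q : Fin 3 → ℝ) :
    (rod η q)ᵀ *ᵥ e3 =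
      ![2 * q 0 * q 2 + 2 * η * q 1, 2 * q 1 * q 2 - 2 * η * q 0, 1 - 2 * (q 0 ^ 2 + q 1 ^ 2)] := by
  ext i
  fin_cases i <;>
    simp [rod, sk, e3, mulVec, dotProduct, Fin.sum_univ_three, transpose_apply, pow_two,
      one_apply] <;> ring

lemma rod_transpose_mulVec_e3_of_sq {v : Fin 3 → ℝ} {n η : ℝ} (hn : n ≠ 0) (hη : η ≠ 0)
    (hnorm : v ⬝ᵥ v = n ^ 2) (hη_sq : 2 * n * η ^ 2 = n - v 2) :
    (rod η ((2 * n * η)⁻¹ • ![v 1, -v 0, 0]))ᵀ *ᵥ e3 = -n⁻¹ • v := by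
  rw [dotProduct_self_fin_three] at hnorm
  rw [rod_transpose_mulVec_e3]
  ext i
  fin_cases i <;>
    simp only [Fin.zero_eta, Fin.mk_one, Fin.reduceFinMk, Fin.isValue, Pi.smul_apply,
      smul_eq_mul, cons_val_zero, cons_val_one, cons_val_two, head_cons, tail_cons, mul_zero]
  · field_simp
    ring
  · field_simp
    ring
  · have hden : n - v 2 ≠ 0 := by
      rw [← hη_sq]
      positivity
    field_simp
    linear_combination (n + v 2) * hη_sq - hnorm

theorem extraction_equation_general (g : ℝ) (μd : Fin 3 → ℝ) (hμ : μd ∉ Lsing g)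
    (ut ηd : ℝ) (qd : Fin 3 → ℝ)
    (hut : ut = vnorm (μd - g • e3))
    (hηd : ηd = Real.sqrt ((1 / 2) * (1 + (g - e3 ⬝ᵥ μd) / vnorm (μd - g • e3))))
    (hqd : qd = (2 * vnorm (μd - g • e3) * ηd)⁻¹ • (sk μd).mulVec e3) :
    μd = g • e3 - ut • (rod ηd qd)ᵀ.mulVec e3 := by
  set v := μd - g • e3 with hv
  set n := vnorm v
  have hlt : v 2 < n :=
    apply_two_lt_vnorm_of_notMem_Lsing_zero ((mem_Lsing_iff_sub_smul_e3 g μd).not.mp hμ)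
  have hn : 0 < n := by
    have := vnorm_sq v
    rw [dotProduct_self_fin_three] at this
    nlinarith [sq_nonneg (v 0), sq_nonneg (v 1)]
  have hηd_arg : (1 / 2) * (1 + (g - e3 ⬝ᵥ μd) / n) = (n - v 2) / (2 * n) := by
    have hv2 : v 2 = μd 2 - g := by simp [v, e3, vecHead, vecTail]
    rw [e3_dotProduct, hv2]
    field_simp
    ring
  have hηd_pos : 0 < ηd := by
    rw [hηd, hηd_arg]
    exact Real.sqrt_pos.mpr (div_pos (by linarith) (by positivity))
  have hηd_sq : 2 * n * ηd ^ 2 = n - v 2 := by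
    rw [hηd, hηd_arg, Real.sq_sqrt (div_pos (by linarith) (by positivity)).le]
    field_simp
  have hqd' : qd = (2 * n * ηd)⁻¹ • ![v 1, -v 0, 0] := by
    rw [hqd, sk_mulVec_e3]
    simp [v, e3, vecHead, vecTail]
  rw [hut, hqd', rod_transpose_mulVec_e3_of_sq hn.ne' hηd_pos.ne' (vnorm_sq v).symm hηd_sq,
    smul_smul, mul_neg, mul_inv_cancel₀ hn.ne', neg_one_smul, sub_neg_eq_add, hv,
    add_sub_cancel]

theorem extraction_equation (g : ℝ) (hg : 0 < g) (μd : Fin 3 → ℝ) (hμ : μd ∉ Lsing g)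
    (ut ηd : ℝ) (qd : Fin 3 → ℝ)
    (hut : ut = vnorm (μd - g • e3))
    (hηd : ηd = Real.sqrt ((1 / 2) * (1 + (g - e3 ⬝ᵥ μd) / vnorm (μd - g • e3))))
    (hqd : qd = (2 * vnorm (μd - g • e3) * ηd)⁻¹ • (sk μd).mulVec e3) :
    μd = g • e3 - ut • (rod ηd qd)ᵀ.mulVec e3 :=
  extraction_equation_general g μd hμ ut ηd qd hut hηd hqd

end
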